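/- Let λ, ν ∈ P_{k,n} with ν_i ≥ λ_i for all 1 ≤ i < m and ν_m < λ_m, where 1 ≤ m ≤ k. Then (|λ| − |λ↑r|) − (|ν| − |ν↑r|) = n for r = n−k−λ_m+m; equivalently the Seidel shift by r extracts exactly one more power of q from λ than from ν. -/
import Mathlib


/-- The first Seidel shift of a partition in `P_{k,n}`:
`λ↑1 = (λ₁+1, …, λ_k+1)` if `λ₁ < n-k`, and `(λ₂, …, λ_k, 0)` if `λ₁ = n-k`. -/
def seidelShift1 (n k : ℕ) (lam : Fin k → ℕ) : Fin k → ℕ :=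
  if hk : 0 < k then
    if lam ⟨0, hk⟩ = n - k then
      fun i => if h : (i : ℕ) + 1 < k then lam ⟨(i : ℕ) + 1, h⟩ else 0
    else fun i => lam i + 1
  else lam

/-- The `p`-th Seidel shift `λ↑p`. -/
def seidelShift (n k : ℕ) (p : ℕ) (lam : Fin k → ℕ) : Fin k → ℕ :=
  (seidelShift1 n k)^[p] lam

/-- The dual partition `λ^∨ = (n-k-λ_k, …, n-k-λ₁)`. -/
def dualPart (n k : ℕ) (lam : Fin k → ℕ) : Fin k → ℕ :=
  fun i => n - k - lam ⟨k - 1 - (i : ℕ), by have := i.isLt; omega⟩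

/-- The number of "wraps" among the first `p` Seidel shifts of `lam`:
index `i` (0-indexed) wraps at step `n-k-lam i + i + 1`. -/
def wrapCount (n k p : ℕ) (lam : Fin k → ℕ) : ℕ :=
  ∑ i : Fin k, if n - k - lam i + (i : ℕ) + 1 ≤ p then 1 else 0

lemma sum_ite_lt (k m : ℕ) (hmk : m ≤ k) :
    (∑ i : Fin k, if (i : ℕ) < m then (1 : ℕ) else 0) = m := by
  rw [Fin.sum_univ_eq_sum_range (fun i => if i < m then (1 : ℕ) else 0)]
  rw [← Finset.sum_filter]
  have h : (Finset.range k).filter (fun i => i < m) = Finset.range m := by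
    ext x; simp; omega
  rw [h]; simp

lemma sum_seidelShift_aux (n : ℕ) :
    ∀ (p k : ℕ), 1 ≤ k → k < n → p ≤ n →
      ∀ (lam : Fin k → ℕ), Antitone lam → (∀ i, lam i ≤ n - k) →
    (∑ i, (seidelShift n k p lam i : ℤ)) =
      (∑ i, (lam i : ℤ)) + k * p - n * wrapCount n k p lam := by
  intro p
  induction p with
  | zero =>
    intro k hk hkn _ lam _ hle
    have hW : wrapCount n k 0 lam = 0 := by
      unfold wrapCount
      apply Finset.sum_eq_zero
      intro i _
      rw [if_neg]; omega
    simp [seidelShift, hW]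
  | succ q ih =>
    intro k hk hkn hp lam hanti hle
    obtain ⟨k', rfl⟩ : ∃ k', k = k' + 1 := ⟨k - 1, by omega⟩
    have hstep : seidelShift n (k' + 1) (q + 1) lam
        = seidelShift n (k' + 1) q (seidelShift1 n (k' + 1) lam) := by
      simp [seidelShift, Function.iterate_succ_apply]
    by_cases h0 : lam ⟨0, Nat.succ_pos k'⟩ = n - (k' + 1)
    · -- wrap case
      have hmu : seidelShift1 n (k' + 1) lam
          = (fun i : Fin (k' + 1) =>
              if h : (i : ℕ) + 1 < k' + 1 then lam ⟨(i : ℕ) + 1, h⟩ else 0) := by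
        unfold seidelShift1
        rw [dif_pos (Nat.succ_pos k'), if_pos h0]
      set mu : Fin (k' + 1) → ℕ :=
        fun i => if h : (i : ℕ) + 1 < k' + 1 then lam ⟨(i : ℕ) + 1, h⟩ else 0 with hmudef
      have hmanti : Antitone mu := by
        intro i j hij
        have hv : (i : ℕ) ≤ (j : ℕ) := hij
        by_cases hj : (j : ℕ) + 1 < k' + 1
        · have hi : (i : ℕ) + 1 < k' + 1 := by omega
          simp only [hmudef, dif_pos hi, dif_pos hj]
          exact hanti (Fin.mk_le_mk.mpr (by omega))
        · simp only [hmudef, dif_neg hj]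
          exact Nat.zero_le _
      have hmle : ∀ i, mu i ≤ n - (k' + 1) := by
        intro i
        by_cases hi : (i : ℕ) + 1 < k' + 1
        · simp only [hmudef, dif_pos hi]; exact hle _
        · simp only [hmudef, dif_neg hi]; exact Nat.zero_le _
      have hsum : (∑ i, (mu i : ℤ)) = (∑ i, (lam i : ℤ)) - ((n - (k' + 1) : ℕ) : ℤ) := by
        rw [Fin.sum_univ_castSucc (fun i => (mu i : ℤ)),
            Fin.sum_univ_succ (fun i => (lam i : ℤ))]
        have hlast : mu (Fin.last k') = 0 := by
          simp only [hmudef, Fin.val_last]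
          rw [dif_neg (by omega)]
        have hcast : ∀ i : Fin k', mu (Fin.castSucc i) = lam i.succ := by
          intro i
          simp only [hmudef, Fin.coe_castSucc]
          rw [dif_pos (by omega)]
          congr 1
        have h00 : lam 0 = lam ⟨0, Nat.succ_pos k'⟩ := rfl
        simp only [hlast, hcast, h00, h0]
        push_cast
        ring
      have hwrap : wrapCount n (k' + 1) (q + 1) lam = 1 + wrapCount n (k' + 1) q mu := by
        unfold wrapCount
        rw [Fin.sum_univ_succ (fun i : Fin (k' + 1) =>
              if n - (k' + 1) - lam i + (i : ℕ) + 1 ≤ q + 1 then (1:ℕ) else 0),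
            Fin.sum_univ_castSucc (fun i : Fin (k' + 1) =>
              if n - (k' + 1) - mu i + (i : ℕ) + 1 ≤ q then (1:ℕ) else 0)]
        have h00 : lam (0 : Fin (k' + 1)) = n - (k' + 1) := h0
        have hfirst : (if n - (k' + 1) - lam (0 : Fin (k' + 1)) + ((0 : Fin (k'+1)) : ℕ) + 1 ≤ q + 1 then (1:ℕ) else 0) = 1 := by
          rw [if_pos]
          rw [h00]
          simp
        have hlast : mu (Fin.last k') = 0 := by
          simp only [hmudef, Fin.val_last]
          rw [dif_neg (by omega)]
        have hlastterm : (if n - (k' + 1) - mu (Fin.last k') + ((Fin.last k') : ℕ) + 1 ≤ q then (1:ℕ) else 0) = 0 := by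
          rw [if_neg]
          rw [hlast]
          simp only [Fin.val_last]
          omega
        rw [hfirst, hlastterm]
        have hterms : ∀ i : Fin k',
            (if n - (k' + 1) - lam (Fin.succ i) + ((Fin.succ i) : ℕ) + 1 ≤ q + 1 then (1:ℕ) else 0)
            = (if n - (k' + 1) - mu (Fin.castSucc i) + ((Fin.castSucc i) : ℕ) + 1 ≤ q then (1:ℕ) else 0) := by
          intro i
          have hcast : mu (Fin.castSucc i) = lam i.succ := by
            simp only [hmudef, Fin.coe_castSucc]
            rw [dif_pos (by omega)]
            congr 1
          rw [hcast]
          have hb := hle i.succ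
          simp only [Fin.val_succ, Fin.coe_castSucc]
          split_ifs <;> omega
        rw [Finset.sum_congr rfl (fun i _ => hterms i)]
        ring
      rw [hstep, hmu]
      rw [ih (k' + 1) hk hkn (by omega) mu hmanti hmle]
      rw [hwrap, hsum]
      have hkle : k' + 1 ≤ n := by omega
      push_cast [Nat.cast_sub hkle]
      ring
    · -- no-wrap case
      have hlt0 : lam ⟨0, Nat.succ_pos k'⟩ < n - (k' + 1) :=
        lt_of_le_of_ne (hle _) h0
      have hmu : seidelShift1 n (k' + 1) lam = (fun i => lam i + 1) := by
        unfold seidelShift1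
        rw [dif_pos (Nat.succ_pos k'), if_neg h0]
      set mu : Fin (k' + 1) → ℕ := fun i => lam i + 1 with hmudef
      have hmanti : Antitone mu := fun i j hij => by
        simp only [hmudef]; exact Nat.succ_le_succ (hanti hij)
      have hmle : ∀ i, mu i ≤ n - (k' + 1) := by
        intro i
        have h1 : lam i ≤ lam ⟨0, Nat.succ_pos k'⟩ :=
          hanti (by simp [Fin.le_def])
        simp only [hmudef]; omega
      have hwrap : wrapCount n (k' + 1) (q + 1) lam = wrapCount n (k' + 1) q mu := by
        unfold wrapCount
        apply Finset.sum_congr rfl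
        intro i _
        have hb := hle i
        have h1 : lam i ≤ lam ⟨0, Nat.succ_pos k'⟩ :=
          hanti (by simp [Fin.le_def])
        have : (n - (k' + 1) - lam i + (i : ℕ) + 1 ≤ q + 1)
            ↔ (n - (k' + 1) - mu i + (i : ℕ) + 1 ≤ q) := by
          simp only [hmudef]
          omega
        simp [this]
      have hsum : (∑ i, (mu i : ℤ)) = (∑ i, (lam i : ℤ)) + (k' + 1) := by
        simp only [hmudef]
        push_cast
        rw [Finset.sum_add_distrib]
        simp
      rw [hstep, hmu]
      rw [ih (k' + 1) hk hkn (by omega) mu hmanti hmle]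
      rw [hwrap, hsum]
      push_cast
      ring

/-- If `ν_i ≥ λ_i` for `1 ≤ i < m` and `ν_m < λ_m`, then for
`r = n-k-λ_m+m` one has `(|λ| - |λ↑r|) - (|ν| - |ν↑r|) = n`. -/
theorem seidelShift_power_diff (n k m : ℕ) (hk : 1 ≤ k) (hkn : k < n)
    (hm1 : 1 ≤ m) (hmk : m ≤ k)
    (lam : Fin k → ℕ) (hanti : Antitone lam) (hle : ∀ i, lam i ≤ n - k)
    (nu : Fin k → ℕ) (hanti' : Antitone nu) (hle' : ∀ i, nu i ≤ n - k)
    (hge : ∀ i : Fin k, (i : ℕ) < m - 1 → lam i ≤ nu i)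
    (hlt : nu ⟨m - 1, by omega⟩ < lam ⟨m - 1, by omega⟩) :
    ((∑ i, (lam i : ℤ)) -
        (∑ i, (seidelShift n k (n - k - lam ⟨m - 1, by omega⟩ + m) lam i : ℤ))) -
      ((∑ i, (nu i : ℤ)) -
        (∑ i, (seidelShift n k (n - k - lam ⟨m - 1, by omega⟩ + m) nu i : ℤ))) =
      (n : ℤ) := by
  set im : Fin k := ⟨m - 1, by omega⟩ with him
  set r : ℕ := n - k - lam im + m with hr
  have hbm := hle im
  have hrn : r ≤ n := by omega
  have hWlam : wrapCount n k r lam = m := by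
    unfold wrapCount
    rw [show (∑ i : Fin k, if n - k - lam i + (i : ℕ) + 1 ≤ r then (1:ℕ) else 0)
        = ∑ i : Fin k, if (i : ℕ) < m then (1:ℕ) else 0 from ?_, sum_ite_lt k m hmk]
    apply Finset.sum_congr rfl
    intro i _
    have hb := hle i
    by_cases hi : (i : ℕ) ≤ m - 1
    · have h1 : lam im ≤ lam i := hanti (by simp [Fin.le_def, him]; omega)
      rw [if_pos (by omega), if_pos (by omega)]
    · have h1 : lam i ≤ lam im := hanti (by simp [Fin.le_def, him]; omega)
      rw [if_neg (by omega), if_neg (by omega)]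
  have hWnu : wrapCount n k r nu = m - 1 := by
    unfold wrapCount
    rw [show (∑ i : Fin k, if n - k - nu i + (i : ℕ) + 1 ≤ r then (1:ℕ) else 0)
        = ∑ i : Fin k, if (i : ℕ) < m - 1 then (1:ℕ) else 0 from ?_,
      sum_ite_lt k (m - 1) (by omega)]
    apply Finset.sum_congr rfl
    intro i _
    have hb := hle' i
    by_cases hi : (i : ℕ) < m - 1
    · have h1 : lam im ≤ lam i := hanti (by simp [Fin.le_def, him]; omega)
      have h2 := hge i hi
      rw [if_pos (by omega), if_pos hi]
    · have h1 : nu i ≤ nu im := hanti' (by simp [Fin.le_def, him]; omega)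
      rw [if_neg (by omega), if_neg hi]
  have hA := sum_seidelShift_aux n r k hk hkn hrn lam hanti hle
  have hB := sum_seidelShift_aux n r k hk hkn hrn nu hanti' hle'
  rw [hA, hB, hWlam, hWnu]
  rw [Nat.cast_sub hm1]
  push_cast
  ring
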